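/- There exists a constant c ∈ (0,∞), depending only on L, k and λ, such that for all x ∈ ℓ̃₂, all r ∈ 𝒮, and all i ∈ ℕ₀, one has |G_i(x,r)| ≤ c · ( |x_{i−1}| + |x_i| + |x_{i+1}| + (r_{i−1} + r_i) · Σ_{m=0}^∞ |x_m| ). In particular G(x,r) ∈ ℓ¹, i.e. Σ_{i=0}^∞ |G_i(x,r)| < ∞. -/
import Mathlib
set_option maxHeartbeats 1000000


noncomputable section

open scoped BigOperators

/-- Tail sum `Σ_{m=j+1}^∞ r m`. -/
def tsumTail (r : ℕ → ℝ) (j : ℕ) : ℝ := ∑' m : ℕ, r (j + 1 + m)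

/-- Membership in `𝒮`: nonnegative summable sequences with total mass 1. -/
def memS (r : ℕ → ℝ) : Prop := (∀ j, 0 ≤ r j) ∧ Summable r ∧ ∑' j, r j = 1

/-- Membership in `ℓ̃₂ = {x ∈ ℓ² : Σ_j j²x_j² < ∞, Σ_j x_j = 0}`. -/
def memLtwoTilde (x : ℕ → ℝ) : Prop :=
  Summable (fun j => (x j) ^ 2) ∧ Summable (fun j : ℕ => (j : ℝ) ^ 2 * (x j) ^ 2) ∧
    (∑' j, x j) = 0

/-- `ξ¹_j(x,r)`. -/
def xi1 (L k : ℕ) (j : ℕ) (x r : ℕ → ℝ) : ℝ :=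
  (∑ i₁ ∈ Finset.range k, (i₁ : ℝ) *
      ((∑ m ∈ Finset.range j, r m) ^ (i₁ - 1) / (i₁.factorial : ℝ)) *
      ∑ i₂ ∈ Finset.Icc 1 (L - i₁),
        (min i₂ (k - i₁) : ℝ) * (r j ^ i₂ / (i₂.factorial : ℝ)) *
          ((tsumTail r j) ^ (L - i₁ - i₂) / ((L - i₁ - i₂).factorial : ℝ))) *
    (∑ m ∈ Finset.range j, x m)

/-- `ξ²_j(x,r)`. -/
def xi2 (L k : ℕ) (j : ℕ) (x r : ℕ → ℝ) : ℝ :=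
  (∑ i₁ ∈ Finset.range k,
      ((∑ m ∈ Finset.range j, r m) ^ i₁ / (i₁.factorial : ℝ)) *
      ∑ i₂ ∈ Finset.Icc 1 (L - i₁),
        (i₂ : ℝ) * (min i₂ (k - i₁) : ℝ) * (r j ^ (i₂ - 1) / (i₂.factorial : ℝ)) *
          ((tsumTail r j) ^ (L - i₁ - i₂) / ((L - i₁ - i₂).factorial : ℝ))) * x j

/-- `ξ³_j(x,r)`. -/
def xi3 (L k : ℕ) (j : ℕ) (x r : ℕ → ℝ) : ℝ :=
  (∑ i₁ ∈ Finset.range k,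
      ((∑ m ∈ Finset.range j, r m) ^ i₁ / (i₁.factorial : ℝ)) *
      ∑ i₂ ∈ Finset.Icc 1 (L - i₁),
        ((L - i₁ - i₂ : ℕ) : ℝ) * (min i₂ (k - i₁) : ℝ) * (r j ^ i₂ / (i₂.factorial : ℝ)) *
          ((tsumTail r j) ^ (L - i₁ - i₂ - 1) / ((L - i₁ - i₂).factorial : ℝ))) *
    (tsumTail x j)

/-- `ξ⁴_j(x) = x_{j+1} − x_j` for `j ≥ 1`, `ξ⁴_0(x) = x_1`. -/
def xi4 (x : ℕ → ℝ) : ℕ → ℝ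
  | 0 => x 1
  | (j + 1) => x (j + 2) - x (j + 1)

/-- `G_j(x,r) = λ·L!·(ξ¹_{j−1} − ξ¹_j + ξ²_{j−1} − ξ²_j + ξ³_{j−1} − ξ³_j) + k·ξ⁴_j`,
with the convention `ξ¹_{−1} = ξ²_{−1} = ξ³_{−1} = 0`. -/
def Gmap (L k : ℕ) (lam : ℝ) (x r : ℕ → ℝ) : ℕ → ℝ
  | 0 => lam * (L.factorial : ℝ) * (-(xi1 L k 0 x r) - xi2 L k 0 x r - xi3 L k 0 x r)
      + (k : ℝ) * xi4 x 0
  | (j + 1) => lam * (L.factorial : ℝ) *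
      (xi1 L k j x r - xi1 L k (j + 1) x r + xi2 L k j x r - xi2 L k (j + 1) x r
        + xi3 L k j x r - xi3 L k (j + 1) x r) + (k : ℝ) * xi4 x (j + 1)

/-- `prevR f i = f_{i−1}` with the convention `f_{−1} = 0`. -/
def prevR (f : ℕ → ℝ) : ℕ → ℝ
  | 0 => 0
  | (i + 1) => f i


lemma absSumLe (s : Finset ℕ) (f : ℕ → ℝ) (M C : ℝ) (hC : 0 ≤ C)
    (hcard : (s.card : ℝ) ≤ M) (h : ∀ i ∈ s, |f i| ≤ C) : |∑ i ∈ s, f i| ≤ M * C := by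
  calc |∑ i ∈ s, f i| ≤ ∑ i ∈ s, |f i| := Finset.abs_sum_le_sum_abs _ _
    _ ≤ ∑ _i ∈ s, C := Finset.sum_le_sum h
    _ = s.card * C := by rw [Finset.sum_const, nsmul_eq_mul]
    _ ≤ M * C := mul_le_mul_of_nonneg_right hcard hC

lemma factOne (m : ℕ) : (1:ℝ) ≤ m.factorial := Nat.one_le_cast.mpr m.factorial_pos

lemma powDivFact {a : ℝ} (h0 : 0 ≤ a) (h1 : a ≤ 1) (n m : ℕ) :
    |a ^ n / (m.factorial : ℝ)| ≤ 1 := by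
  rw [abs_of_nonneg (div_nonneg (pow_nonneg h0 n) (by positivity))]
  calc a ^ n / (m.factorial : ℝ) ≤ a ^ n := div_le_self (pow_nonneg h0 n) (factOne m)
    _ ≤ 1 := pow_le_one₀ h0 h1

lemma powDivFactLe {a : ℝ} (h0 : 0 ≤ a) (h1 : a ≤ 1) {i : ℕ} (m : ℕ) (hi : 1 ≤ i) :
    |a ^ i / (m.factorial : ℝ)| ≤ a := by
  rw [abs_of_nonneg (div_nonneg (pow_nonneg h0 i) (by positivity))]
  calc a ^ i / (m.factorial : ℝ) ≤ a ^ i := div_le_self (pow_nonneg h0 i) (factOne m)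
    _ ≤ a ^ 1 := pow_le_pow_of_le_one h0 h1 hi
    _ = a := pow_one a

lemma abs3 (a b c : ℝ) : |-a - b - c| ≤ |a| + |b| + |c| := by
  calc |-a - b - c| ≤ |-a - b| + |c| := abs_sub _ _
    _ ≤ |-a| + |b| + |c| := by have := abs_sub (-a) b; linarith
    _ = |a| + |b| + |c| := by rw [abs_neg]

lemma abs6 (a b c d e f : ℝ) :
    |a - b + c - d + e - f| ≤ |a| + |b| + |c| + |d| + |e| + |f| := by
  calc |a - b + c - d + e - f| ≤ |a - b + c - d + e| + |f| := abs_sub _ _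
    _ ≤ |a - b + c - d| + |e| + |f| := by have := abs_add_le (a - b + c - d) e; linarith
    _ ≤ |a - b + c| + |d| + |e| + |f| := by have := abs_sub (a - b + c) d; linarith
    _ ≤ |a - b| + |c| + |d| + |e| + |f| := by have := abs_add_le (a - b) c; linarith
    _ ≤ |a| + |b| + |c| + |d| + |e| + |f| := by have := abs_sub a b; linarith

lemma summable_abs_of_memLtwoTilde (x : ℕ → ℝ) (hx : memLtwoTilde x) :
    Summable fun n => |x n| := by
  obtain ⟨-, h2, -⟩ := hx
  have hp : Summable (fun n : ℕ => 1 / ((n:ℝ) + 1) ^ 2) := by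
    have h := Real.summable_one_div_nat_pow.mpr (show 1 < 2 by norm_num)
    have h' := (summable_nat_add_iff (f := fun n : ℕ => 1 / (n:ℝ) ^ 2) 1).mpr h
    have he : (fun n : ℕ => 1 / ((n + 1 : ℕ) : ℝ) ^ 2) = fun n : ℕ => 1 / ((n:ℝ) + 1) ^ 2 := by
      funext n; push_cast; ring
    rwa [he] at h'
  have h2' : Summable (fun n : ℕ => (((n + 1 : ℕ)) : ℝ) ^ 2 * x (n + 1) ^ 2) :=
    (summable_nat_add_iff 1).mpr h2
  have key : ∀ n : ℕ, |x (n + 1)| ≤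
      ((((n + 1 : ℕ)) : ℝ) ^ 2 * x (n + 1) ^ 2 + 1 / ((n:ℝ) + 1) ^ 2) / 2 := by
    intro n
    set t : ℝ := (n:ℝ) + 1 with ht
    have ht0 : (0:ℝ) < t := by have : (0:ℝ) ≤ n := n.cast_nonneg; simp [ht]; linarith
    have hcast : (((n + 1 : ℕ)) : ℝ) = t := by push_cast [ht]; ring
    rw [hcast]
    have hsq : x (n + 1) ^ 2 = |x (n + 1)| ^ 2 := (sq_abs _).symm
    rw [hsq]
    set y := |x (n + 1)| with hy
    have hy0 : 0 ≤ y := abs_nonneg _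
    have htne : t ≠ 0 := ne_of_gt ht0
    have hexp : t ^ 2 * y ^ 2 + 1 / t ^ 2 - 2 * y = (t * y - 1 / t) ^ 2 := by
      field_simp; ring
    have hnn := sq_nonneg (t * y - 1 / t)
    linarith
  have hs1 : Summable fun n => |x (n + 1)| :=
    Summable.of_nonneg_of_le (fun n => abs_nonneg _) key ((h2'.add hp).div_const 2)
  exact (summable_nat_add_iff 1).mp hs1

lemma tail_eq (f : ℕ → ℝ) (j : ℕ) :
    (fun m => f (j + 1 + m)) = fun m => f (m + (j + 1)) := by
  funext m; rw [add_comm]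

lemma tsumTail_r_mem {r : ℕ → ℝ} (hr : memS r) (j : ℕ) :
    0 ≤ tsumTail r j ∧ tsumTail r j ≤ 1 := by
  obtain ⟨hr0, hrs, hr1⟩ := hr
  constructor
  · exact tsum_nonneg fun m => hr0 _
  · rw [tsumTail, tail_eq]
    have h := Summable.sum_add_tsum_nat_add (f := r) (j + 1) hrs
    rw [hr1] at h
    have hpre : 0 ≤ ∑ i ∈ Finset.range (j + 1), r i := Finset.sum_nonneg fun i _ => hr0 i
    linarith

lemma abs_tsumTail_le {x : ℕ → ℝ} (hxs : Summable fun n => |x n|) (j : ℕ) :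
    |tsumTail x j| ≤ ∑' m, |x m| := by
  have habs1 : Summable fun m => |x (m + (j + 1))| := (summable_nat_add_iff (j + 1)).mpr hxs
  have habs1' : Summable fun m => |x (j + 1 + m)| := by rwa [← tail_eq (fun n => |x n|)] at habs1
  have h1 : |∑' m, x (j + 1 + m)| ≤ ∑' m, |x (j + 1 + m)| := by
    have h' : Summable fun m => ‖x (j + 1 + m)‖ := by simpa [Real.norm_eq_abs] using habs1'
    simpa [Real.norm_eq_abs] using norm_tsum_le_tsum_norm h'
  have h2 : ∑' m, |x (j + 1 + m)| ≤ ∑' m, |x m| := by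
    rw [tail_eq (fun n => |x n|)]
    have h := Summable.sum_add_tsum_nat_add (f := fun n => |x n|) (j + 1) hxs
    have hpre : 0 ≤ ∑ i ∈ Finset.range (j + 1), |x i| := Finset.sum_nonneg fun i _ => abs_nonneg _
    linarith
  exact (h1.trans h2)
lemma xi1_bound (L k : ℕ) (hL : 1 ≤ L) (hk : 1 ≤ k) (x r : ℕ → ℝ)
    (hxs : Summable fun n => |x n|) (hr : memS r) (j : ℕ) :
    |xi1 L k j x r| ≤ ((k:ℝ) * k * L * L * L) * (r j * ∑' m, |x m|) := by
  obtain ⟨hr0, hrs, hr1⟩ := hr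
  have hS0 : 0 ≤ ∑' m, |x m| := tsum_nonneg fun _ => abs_nonneg _
  have hP0 : 0 ≤ ∑ m ∈ Finset.range j, r m := Finset.sum_nonneg fun i _ => hr0 i
  have hP1 : ∑ m ∈ Finset.range j, r m ≤ 1 := by
    rw [← hr1]; exact Summable.sum_le_tsum _ (fun i _ => hr0 i) hrs
  obtain ⟨hT0, hT1⟩ := tsumTail_r_mem ⟨hr0, hrs, hr1⟩ j
  have hrj0 : 0 ≤ r j := hr0 j
  have hrj1 : r j ≤ 1 := by rw [← hr1]; exact Summable.le_tsum hrs j fun i _ => hr0 i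
  have hk0 : (0:ℝ) ≤ k := Nat.cast_nonneg k
  have hL0 : (0:ℝ) ≤ L := Nat.cast_nonneg L
  have hX : |∑ m ∈ Finset.range j, x m| ≤ ∑' m, |x m| :=
    (Finset.abs_sum_le_sum_abs _ _).trans (Summable.sum_le_tsum _ (fun i _ => abs_nonneg _) hxs)
  rw [xi1, abs_mul]
  have houter : |∑ i₁ ∈ Finset.range k, (i₁ : ℝ) *
      ((∑ m ∈ Finset.range j, r m) ^ (i₁ - 1) / (i₁.factorial : ℝ)) *
      ∑ i₂ ∈ Finset.Icc 1 (L - i₁),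
        (min i₂ (k - i₁) : ℝ) * (r j ^ i₂ / (i₂.factorial : ℝ)) *
          ((tsumTail r j) ^ (L - i₁ - i₂) / ((L - i₁ - i₂).factorial : ℝ))|
      ≤ (k:ℝ) * ((k:ℝ) * ((L:ℝ) * ((L:ℝ) * r j))) := by
    apply absSumLe
    · exact mul_nonneg hk0 (mul_nonneg hL0 (mul_nonneg hL0 hrj0))
    · simp
    · intro i₁ hi₁
      have hi₁k : (i₁:ℝ) + 1 ≤ (k:ℝ) := by exact_mod_cast Finset.mem_range.mp hi₁
      have h1 : |(i₁ : ℝ)| ≤ (k:ℝ) := by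
        rw [abs_of_nonneg (Nat.cast_nonneg i₁)]; linarith
      have h2 := powDivFact hP0 hP1 (i₁ - 1) i₁
      have hinner : |∑ i₂ ∈ Finset.Icc 1 (L - i₁),
          (min i₂ (k - i₁) : ℝ) * (r j ^ i₂ / (i₂.factorial : ℝ)) *
            ((tsumTail r j) ^ (L - i₁ - i₂) / ((L - i₁ - i₂).factorial : ℝ))|
          ≤ (L:ℝ) * ((L:ℝ) * r j) := by
        apply absSumLe
        · exact mul_nonneg hL0 hrj0
        · rw [Nat.card_Icc]; exact_mod_cast (by omega : L - i₁ + 1 - 1 ≤ L)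
        · intro i₂ hi₂
          obtain ⟨hm1, hm2⟩ := Finset.mem_Icc.mp hi₂
          have hi2L : (i₂:ℝ) ≤ (L:ℝ) := by
            exact_mod_cast hm2.trans (Nat.sub_le L i₁)
          have hmin : |(min i₂ (k - i₁) : ℝ)| ≤ (L:ℝ) := by
            rw [abs_of_nonneg (le_min (Nat.cast_nonneg i₂) (by linarith))]
            exact (min_le_left _ _).trans hi2L
          have hpow := powDivFactLe hrj0 hrj1 i₂ hm1
          have htail := powDivFact hT0 hT1 (L - i₁ - i₂) (L - i₁ - i₂)
          calc _ = |(min i₂ (k - i₁) : ℝ) * (r j ^ i₂ / (i₂.factorial : ℝ))| *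
                |(tsumTail r j) ^ (L - i₁ - i₂) / ((L - i₁ - i₂).factorial : ℝ)| :=
                abs_mul _ _
            _ ≤ ((L:ℝ) * r j) * 1 := by
                apply mul_le_mul _ htail (abs_nonneg _) (mul_nonneg hL0 hrj0)
                rw [abs_mul]
                exact mul_le_mul hmin hpow (abs_nonneg _) hL0
            _ = (L:ℝ) * r j := mul_one _
      calc _ = |(i₁ : ℝ) * ((∑ m ∈ Finset.range j, r m) ^ (i₁ - 1) / (i₁.factorial : ℝ))| *
            |∑ i₂ ∈ Finset.Icc 1 (L - i₁),
              (min i₂ (k - i₁) : ℝ) * (r j ^ i₂ / (i₂.factorial : ℝ)) *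
                ((tsumTail r j) ^ (L - i₁ - i₂) / ((L - i₁ - i₂).factorial : ℝ))| := abs_mul _ _
        _ ≤ ((k:ℝ) * 1) * ((L:ℝ) * ((L:ℝ) * r j)) := by
            apply mul_le_mul _ hinner (abs_nonneg _) (by positivity)
            rw [abs_mul]
            exact mul_le_mul h1 h2 (abs_nonneg _) hk0
        _ = (k:ℝ) * ((L:ℝ) * ((L:ℝ) * r j)) := by ring
  calc _ ≤ ((k:ℝ) * ((k:ℝ) * ((L:ℝ) * ((L:ℝ) * r j)))) * (∑' m, |x m|) :=
        mul_le_mul houter hX (abs_nonneg _)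
          (mul_nonneg hk0 (mul_nonneg hk0 (mul_nonneg hL0 (mul_nonneg hL0 hrj0))))
    _ = ((k:ℝ) * k * L * L) * (r j * ∑' m, |x m|) := by ring
    _ ≤ ((k:ℝ) * k * L * L * L) * (r j * ∑' m, |x m|) := by
        apply mul_le_mul_of_nonneg_right _ (mul_nonneg hrj0 hS0)
        exact le_mul_of_one_le_right (by positivity) (by exact_mod_cast hL)

lemma xi2_bound (L k : ℕ) (hL : 1 ≤ L) (hk : 1 ≤ k) (x r : ℕ → ℝ)
    (hxs : Summable fun n => |x n|) (hr : memS r) (j : ℕ) :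
    |xi2 L k j x r| ≤ ((k:ℝ) * k * L * L * L) * |x j| := by
  obtain ⟨hr0, hrs, hr1⟩ := hr
  have hP0 : 0 ≤ ∑ m ∈ Finset.range j, r m := Finset.sum_nonneg fun i _ => hr0 i
  have hP1 : ∑ m ∈ Finset.range j, r m ≤ 1 := by
    rw [← hr1]; exact Summable.sum_le_tsum _ (fun i _ => hr0 i) hrs
  obtain ⟨hT0, hT1⟩ := tsumTail_r_mem ⟨hr0, hrs, hr1⟩ j
  have hrj0 : 0 ≤ r j := hr0 j
  have hrj1 : r j ≤ 1 := by rw [← hr1]; exact Summable.le_tsum hrs j fun i _ => hr0 i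
  have hk0 : (0:ℝ) ≤ k := Nat.cast_nonneg k
  have hk1 : (1:ℝ) ≤ k := by exact_mod_cast hk
  have hL0 : (0:ℝ) ≤ L := Nat.cast_nonneg L
  rw [xi2, abs_mul]
  have houter : |∑ i₁ ∈ Finset.range k,
      ((∑ m ∈ Finset.range j, r m) ^ i₁ / (i₁.factorial : ℝ)) *
      ∑ i₂ ∈ Finset.Icc 1 (L - i₁),
        (i₂ : ℝ) * (min i₂ (k - i₁) : ℝ) * (r j ^ (i₂ - 1) / (i₂.factorial : ℝ)) *
          ((tsumTail r j) ^ (L - i₁ - i₂) / ((L - i₁ - i₂).factorial : ℝ))|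
      ≤ (k:ℝ) * ((L:ℝ) * ((L:ℝ) * (L:ℝ))) := by
    apply absSumLe
    · exact mul_nonneg hL0 (mul_nonneg hL0 hL0)
    · simp
    · intro i₁ hi₁
      have hi₁k : (i₁:ℝ) + 1 ≤ (k:ℝ) := by exact_mod_cast Finset.mem_range.mp hi₁
      have h2 := powDivFact hP0 hP1 i₁ i₁
      have hinner : |∑ i₂ ∈ Finset.Icc 1 (L - i₁),
          (i₂ : ℝ) * (min i₂ (k - i₁) : ℝ) * (r j ^ (i₂ - 1) / (i₂.factorial : ℝ)) *
            ((tsumTail r j) ^ (L - i₁ - i₂) / ((L - i₁ - i₂).factorial : ℝ))|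
          ≤ (L:ℝ) * ((L:ℝ) * (L:ℝ)) := by
        apply absSumLe
        · exact mul_nonneg hL0 hL0
        · rw [Nat.card_Icc]; exact_mod_cast (by omega : L - i₁ + 1 - 1 ≤ L)
        · intro i₂ hi₂
          obtain ⟨hm1, hm2⟩ := Finset.mem_Icc.mp hi₂
          have hi2L : (i₂:ℝ) ≤ (L:ℝ) := by
            exact_mod_cast hm2.trans (Nat.sub_le L i₁)
          have hi2abs : |(i₂:ℝ)| ≤ (L:ℝ) := by
            rw [abs_of_nonneg (Nat.cast_nonneg i₂)]; exact hi2L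
          have hmin : |(min i₂ (k - i₁) : ℝ)| ≤ (L:ℝ) := by
            rw [abs_of_nonneg (le_min (Nat.cast_nonneg i₂) (by linarith))]
            exact (min_le_left _ _).trans hi2L
          have hpow := powDivFact hrj0 hrj1 (i₂ - 1) i₂
          have htail := powDivFact hT0 hT1 (L - i₁ - i₂) (L - i₁ - i₂)
          calc _ = |(i₂ : ℝ) * (min i₂ (k - i₁) : ℝ) * (r j ^ (i₂ - 1) / (i₂.factorial : ℝ))| *
                |(tsumTail r j) ^ (L - i₁ - i₂) / ((L - i₁ - i₂).factorial : ℝ)| :=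
                abs_mul _ _
            _ ≤ (((L:ℝ) * (L:ℝ)) * 1) * 1 := by
                apply mul_le_mul _ htail (abs_nonneg _) (by positivity)
                rw [abs_mul]
                apply mul_le_mul _ hpow (abs_nonneg _) (by positivity)
                rw [abs_mul]
                exact mul_le_mul hi2abs hmin (abs_nonneg _) hL0
            _ = (L:ℝ) * (L:ℝ) := by ring
      calc _ = |(∑ m ∈ Finset.range j, r m) ^ i₁ / (i₁.factorial : ℝ)| *
            |∑ i₂ ∈ Finset.Icc 1 (L - i₁),
              (i₂ : ℝ) * (min i₂ (k - i₁) : ℝ) * (r j ^ (i₂ - 1) / (i₂.factorial : ℝ)) *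
                ((tsumTail r j) ^ (L - i₁ - i₂) / ((L - i₁ - i₂).factorial : ℝ))| := abs_mul _ _
        _ ≤ 1 * ((L:ℝ) * ((L:ℝ) * (L:ℝ))) :=
            mul_le_mul h2 hinner (abs_nonneg _) zero_le_one
        _ = (L:ℝ) * ((L:ℝ) * (L:ℝ)) := one_mul _
  calc _ ≤ ((k:ℝ) * ((L:ℝ) * ((L:ℝ) * (L:ℝ)))) * |x j| :=
        mul_le_mul houter le_rfl (abs_nonneg _)
          (mul_nonneg hk0 (mul_nonneg hL0 (mul_nonneg hL0 hL0)))
    _ = ((k:ℝ) * 1 * L * L * L) * |x j| := by ring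
    _ ≤ ((k:ℝ) * k * L * L * L) * |x j| := by
        apply mul_le_mul_of_nonneg_right _ (abs_nonneg _)
        have : (0:ℝ) ≤ (k:ℝ) * L * L * L :=
          mul_nonneg (mul_nonneg (mul_nonneg hk0 hL0) hL0) hL0
        nlinarith

lemma xi3_bound (L k : ℕ) (hL : 1 ≤ L) (hk : 1 ≤ k) (x r : ℕ → ℝ)
    (hxs : Summable fun n => |x n|) (hr : memS r) (j : ℕ) :
    |xi3 L k j x r| ≤ ((k:ℝ) * k * L * L * L) * (r j * ∑' m, |x m|) := by
  obtain ⟨hr0, hrs, hr1⟩ := hr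
  have hS0 : 0 ≤ ∑' m, |x m| := tsum_nonneg fun _ => abs_nonneg _
  have hP0 : 0 ≤ ∑ m ∈ Finset.range j, r m := Finset.sum_nonneg fun i _ => hr0 i
  have hP1 : ∑ m ∈ Finset.range j, r m ≤ 1 := by
    rw [← hr1]; exact Summable.sum_le_tsum _ (fun i _ => hr0 i) hrs
  obtain ⟨hT0, hT1⟩ := tsumTail_r_mem ⟨hr0, hrs, hr1⟩ j
  have hrj0 : 0 ≤ r j := hr0 j
  have hrj1 : r j ≤ 1 := by rw [← hr1]; exact Summable.le_tsum hrs j fun i _ => hr0 i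
  have hk0 : (0:ℝ) ≤ k := Nat.cast_nonneg k
  have hk1 : (1:ℝ) ≤ k := by exact_mod_cast hk
  have hL0 : (0:ℝ) ≤ L := Nat.cast_nonneg L
  have hXT : |tsumTail x j| ≤ ∑' m, |x m| := abs_tsumTail_le hxs j
  rw [xi3, abs_mul]
  have houter : |∑ i₁ ∈ Finset.range k,
      ((∑ m ∈ Finset.range j, r m) ^ i₁ / (i₁.factorial : ℝ)) *
      ∑ i₂ ∈ Finset.Icc 1 (L - i₁),
        ((L - i₁ - i₂ : ℕ) : ℝ) * (min i₂ (k - i₁) : ℝ) * (r j ^ i₂ / (i₂.factorial : ℝ)) *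
          ((tsumTail r j) ^ (L - i₁ - i₂ - 1) / ((L - i₁ - i₂).factorial : ℝ))|
      ≤ (k:ℝ) * ((L:ℝ) * ((L:ℝ) * ((L:ℝ) * r j))) := by
    apply absSumLe
    · exact mul_nonneg hL0 (mul_nonneg hL0 (mul_nonneg hL0 hrj0))
    · simp
    · intro i₁ hi₁
      have hi₁k : (i₁:ℝ) + 1 ≤ (k:ℝ) := by exact_mod_cast Finset.mem_range.mp hi₁
      have h2 := powDivFact hP0 hP1 i₁ i₁
      have hinner : |∑ i₂ ∈ Finset.Icc 1 (L - i₁),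
          ((L - i₁ - i₂ : ℕ) : ℝ) * (min i₂ (k - i₁) : ℝ) * (r j ^ i₂ / (i₂.factorial : ℝ)) *
            ((tsumTail r j) ^ (L - i₁ - i₂ - 1) / ((L - i₁ - i₂).factorial : ℝ))|
          ≤ (L:ℝ) * ((L:ℝ) * ((L:ℝ) * r j)) := by
        apply absSumLe
        · exact mul_nonneg hL0 (mul_nonneg hL0 hrj0)
        · rw [Nat.card_Icc]; exact_mod_cast (by omega : L - i₁ + 1 - 1 ≤ L)
        · intro i₂ hi₂
          obtain ⟨hm1, hm2⟩ := Finset.mem_Icc.mp hi₂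
          have hi2L : (i₂:ℝ) ≤ (L:ℝ) := by
            exact_mod_cast hm2.trans (Nat.sub_le L i₁)
          have hcoef : |((L - i₁ - i₂ : ℕ) : ℝ)| ≤ (L:ℝ) := by
            rw [abs_of_nonneg (Nat.cast_nonneg _)]
            exact_mod_cast (Nat.sub_le (L - i₁) i₂).trans (Nat.sub_le L i₁)
          have hmin : |(min i₂ (k - i₁) : ℝ)| ≤ (L:ℝ) := by
            rw [abs_of_nonneg (le_min (Nat.cast_nonneg i₂) (by linarith))]
            exact (min_le_left _ _).trans hi2L
          have hpow := powDivFactLe hrj0 hrj1 i₂ hm1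
          have htail := powDivFact hT0 hT1 (L - i₁ - i₂ - 1) (L - i₁ - i₂)
          calc _ = |((L - i₁ - i₂ : ℕ) : ℝ) * (min i₂ (k - i₁) : ℝ) *
                (r j ^ i₂ / (i₂.factorial : ℝ))| *
                |(tsumTail r j) ^ (L - i₁ - i₂ - 1) / ((L - i₁ - i₂).factorial : ℝ)| :=
                abs_mul _ _
            _ ≤ (((L:ℝ) * (L:ℝ)) * r j) * 1 := by
                apply mul_le_mul _ htail (abs_nonneg _)
                  (mul_nonneg (mul_nonneg hL0 hL0) hrj0)
                rw [abs_mul]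
                apply mul_le_mul _ hpow (abs_nonneg _) (mul_nonneg hL0 hL0)
                rw [abs_mul]
                exact mul_le_mul hcoef hmin (abs_nonneg _) hL0
            _ = (L:ℝ) * ((L:ℝ) * r j) := by ring
      calc _ = |(∑ m ∈ Finset.range j, r m) ^ i₁ / (i₁.factorial : ℝ)| *
            |∑ i₂ ∈ Finset.Icc 1 (L - i₁),
              ((L - i₁ - i₂ : ℕ) : ℝ) * (min i₂ (k - i₁) : ℝ) * (r j ^ i₂ / (i₂.factorial : ℝ)) *
                ((tsumTail r j) ^ (L - i₁ - i₂ - 1) / ((L - i₁ - i₂).factorial : ℝ))| := abs_mul _ _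
        _ ≤ 1 * ((L:ℝ) * ((L:ℝ) * ((L:ℝ) * r j))) :=
            mul_le_mul h2 hinner (abs_nonneg _) zero_le_one
        _ = (L:ℝ) * ((L:ℝ) * ((L:ℝ) * r j)) := one_mul _
  calc _ ≤ ((k:ℝ) * ((L:ℝ) * ((L:ℝ) * ((L:ℝ) * r j)))) * (∑' m, |x m|) :=
        mul_le_mul houter hXT (abs_nonneg _)
          (mul_nonneg hk0 (mul_nonneg hL0 (mul_nonneg hL0 (mul_nonneg hL0 hrj0))))
    _ = ((k:ℝ) * 1 * L * L * L) * (r j * ∑' m, |x m|) := by ring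
    _ ≤ ((k:ℝ) * k * L * L * L) * (r j * ∑' m, |x m|) := by
        apply mul_le_mul_of_nonneg_right _ (mul_nonneg hrj0 hS0)
        have : (0:ℝ) ≤ (k:ℝ) * L * L * L :=
          mul_nonneg (mul_nonneg (mul_nonneg hk0 hL0) hL0) hL0
        nlinarith

/-- there is `c ∈ (0,∞)`, depending only on `L`, `k`, `λ`, such that for all
`x ∈ ℓ̃₂`, `r ∈ 𝒮`, and `i ∈ ℕ₀`,
`|G_i(x,r)| ≤ c(|x_{i−1}| + |x_i| + |x_{i+1}| + (r_{i−1} + r_i)·Σ_m |x_m|)`;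
in particular `G(x,r) ∈ ℓ¹`. -/
theorem Gmap_coord_bound (L k : ℕ) (hL : 1 ≤ L) (hk : 1 ≤ k) (hkL : k ≤ L)
    (lam : ℝ) (hlam : 0 < lam) :
    ∃ c : ℝ, 0 < c ∧ ∀ x r : ℕ → ℝ, memLtwoTilde x → memS r →
      (∀ i : ℕ, |Gmap L k lam x r i|
          ≤ c * (|prevR x i| + |x i| + |x (i + 1)|
              + (prevR r i + r i) * ∑' m, |x m|)) ∧
      Summable (fun i => |Gmap L k lam x r i|) := by
  have hk0 : (0:ℝ) ≤ k := Nat.cast_nonneg k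
  have hk1 : (1:ℝ) ≤ k := by exact_mod_cast hk
  have hL1 : (1:ℝ) ≤ L := by exact_mod_cast hL
  have hB0 : (0:ℝ) < (k:ℝ) * k * L * L * L := by
    have h1 : (0:ℝ) < k := by linarith
    have h2 : (0:ℝ) < L := by linarith
    exact mul_pos (mul_pos (mul_pos (mul_pos h1 h1) h2) h2) h2
  have hF0 : (0:ℝ) < (L.factorial : ℝ) := by exact_mod_cast L.factorial_pos
  have hlamF : 0 < lam * (L.factorial : ℝ) := mul_pos hlam hF0
  refine ⟨lam * (L.factorial : ℝ) * 2 * ((k:ℝ) * k * L * L * L) + k + 1, by nlinarith, ?_⟩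
  intro x r hx hr
  have hxs := summable_abs_of_memLtwoTilde x hx
  have hS0 : 0 ≤ ∑' m, |x m| := tsum_nonneg fun _ => abs_nonneg _
  have hr0 := hr.1
  have hrs := hr.2.1
  have hb1 := xi1_bound L k hL hk x r hxs hr
  have hb2 := xi2_bound L k hL hk x r hxs hr
  have hb3 := xi3_bound L k hL hk x r hxs hr
  have hlamFB := mul_nonneg hlamF.le hB0.le
  have main : ∀ i : ℕ, |Gmap L k lam x r i|
      ≤ (lam * (L.factorial : ℝ) * 2 * ((k:ℝ) * k * L * L * L) + k + 1) *
        (|prevR x i| + |x i| + |x (i + 1)| + (prevR r i + r i) * ∑' m, |x m|) := by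
    intro i
    cases i with
    | zero =>
      have hG : Gmap L k lam x r 0 = lam * (L.factorial : ℝ) *
          (-(xi1 L k 0 x r) - xi2 L k 0 x r - xi3 L k 0 x r) + (k : ℝ) * x 1 := rfl
      have h1 : |Gmap L k lam x r 0|
          ≤ lam * (L.factorial : ℝ) *
            (|xi1 L k 0 x r| + |xi2 L k 0 x r| + |xi3 L k 0 x r|) + (k:ℝ) * |x 1| := by
        rw [hG]
        calc _ ≤ |lam * (L.factorial : ℝ) *
              (-(xi1 L k 0 x r) - xi2 L k 0 x r - xi3 L k 0 x r)| + |(k:ℝ) * x 1| :=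
              abs_add_le _ _
          _ = lam * (L.factorial : ℝ) *
              |(-(xi1 L k 0 x r) - xi2 L k 0 x r - xi3 L k 0 x r)| + (k:ℝ) * |x 1| := by
              rw [abs_mul, abs_mul, abs_mul, abs_of_pos hlam, abs_of_pos hF0, abs_of_nonneg hk0]
          _ ≤ _ := add_le_add
              (mul_le_mul_of_nonneg_left (abs3 _ _ _) hlamF.le) le_rfl
      have h2 : |xi1 L k 0 x r| + |xi2 L k 0 x r| + |xi3 L k 0 x r|
          ≤ ((k:ℝ) * k * L * L * L) * (r 0 * ∑' m, |x m|) +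
            ((k:ℝ) * k * L * L * L) * |x 0| +
            ((k:ℝ) * k * L * L * L) * (r 0 * ∑' m, |x m|) :=
        add_le_add (add_le_add (hb1 0) (hb2 0)) (hb3 0)
      have hp0 : 0 ≤ r 0 * ∑' m, |x m| := mul_nonneg (hr0 0) hS0
      simp only [prevR, abs_zero, zero_add]
      nlinarith [mul_nonneg hlamFB hp0, mul_nonneg hlamFB (abs_nonneg (x 0)),
        mul_nonneg hlamFB (abs_nonneg (x 1)), mul_nonneg hk0 hp0,
        mul_nonneg hk0 (abs_nonneg (x 0)), hp0, abs_nonneg (x 0), abs_nonneg (x 1),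
        mul_le_mul_of_nonneg_left h2 hlamF.le]
    | succ j =>
      have hG : Gmap L k lam x r (j + 1) = lam * (L.factorial : ℝ) *
          (xi1 L k j x r - xi1 L k (j + 1) x r + xi2 L k j x r - xi2 L k (j + 1) x r
            + xi3 L k j x r - xi3 L k (j + 1) x r) + (k : ℝ) * (x (j + 2) - x (j + 1)) := rfl
      have h1 : |Gmap L k lam x r (j + 1)|
          ≤ lam * (L.factorial : ℝ) *
            (|xi1 L k j x r| + |xi1 L k (j + 1) x r| + |xi2 L k j x r| +
              |xi2 L k (j + 1) x r| + |xi3 L k j x r| + |xi3 L k (j + 1) x r|) +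
            (k:ℝ) * (|x (j + 2)| + |x (j + 1)|) := by
        rw [hG]
        calc _ ≤ |lam * (L.factorial : ℝ) *
              (xi1 L k j x r - xi1 L k (j + 1) x r + xi2 L k j x r - xi2 L k (j + 1) x r
                + xi3 L k j x r - xi3 L k (j + 1) x r)| + |(k:ℝ) * (x (j + 2) - x (j + 1))| :=
              abs_add_le _ _
          _ = lam * (L.factorial : ℝ) *
              |xi1 L k j x r - xi1 L k (j + 1) x r + xi2 L k j x r - xi2 L k (j + 1) x r
                + xi3 L k j x r - xi3 L k (j + 1) x r| + (k:ℝ) * |x (j + 2) - x (j + 1)| := by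
              rw [abs_mul, abs_mul, abs_mul, abs_of_pos hlam, abs_of_pos hF0, abs_of_nonneg hk0]
          _ ≤ _ := add_le_add
              (mul_le_mul_of_nonneg_left (abs6 _ _ _ _ _ _) hlamF.le)
              (mul_le_mul_of_nonneg_left (abs_sub _ _) hk0)
      have h2 : |xi1 L k j x r| + |xi1 L k (j + 1) x r| + |xi2 L k j x r| +
            |xi2 L k (j + 1) x r| + |xi3 L k j x r| + |xi3 L k (j + 1) x r|
          ≤ ((k:ℝ) * k * L * L * L) * (r j * ∑' m, |x m|) +
            ((k:ℝ) * k * L * L * L) * (r (j + 1) * ∑' m, |x m|) +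
            ((k:ℝ) * k * L * L * L) * |x j| +
            ((k:ℝ) * k * L * L * L) * |x (j + 1)| +
            ((k:ℝ) * k * L * L * L) * (r j * ∑' m, |x m|) +
            ((k:ℝ) * k * L * L * L) * (r (j + 1) * ∑' m, |x m|) :=
        add_le_add (add_le_add (add_le_add (add_le_add (add_le_add
          (hb1 j) (hb1 (j + 1))) (hb2 j)) (hb2 (j + 1))) (hb3 j)) (hb3 (j + 1))
      have hp0 : 0 ≤ r j * ∑' m, |x m| := mul_nonneg (hr0 j) hS0
      have hq0 : 0 ≤ r (j + 1) * ∑' m, |x m| := mul_nonneg (hr0 (j + 1)) hS0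
      simp only [prevR]
      nlinarith [mul_nonneg hlamFB hp0, mul_nonneg hlamFB hq0,
        mul_nonneg hlamFB (abs_nonneg (x j)), mul_nonneg hlamFB (abs_nonneg (x (j + 1))),
        mul_nonneg hlamFB (abs_nonneg (x (j + 2))), mul_nonneg hk0 hp0, mul_nonneg hk0 hq0,
        mul_nonneg hk0 (abs_nonneg (x j)), mul_nonneg hk0 (abs_nonneg (x (j + 1))),
        hp0, hq0, abs_nonneg (x j), abs_nonneg (x (j + 1)), abs_nonneg (x (j + 2)),
        mul_le_mul_of_nonneg_left h2 hlamF.le]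
  refine ⟨main, ?_⟩
  have hsx1 : Summable fun i => |x (i + 1)| := (summable_nat_add_iff 1).mpr hxs
  have hsxp : Summable fun i => |prevR x i| := by
    apply (summable_nat_add_iff 1).mp
    exact hxs
  have hsrp : Summable fun i => prevR r i := by
    apply (summable_nat_add_iff 1).mp
    exact hrs
  have hg : Summable (fun i => (lam * (L.factorial : ℝ) * 2 * ((k:ℝ) * k * L * L * L) + k + 1) *
      (|prevR x i| + |x i| + |x (i + 1)| + (prevR r i + r i) * ∑' m, |x m|)) :=
    ((((hsxp.add hxs).add hsx1).add ((hsrp.add hrs).mul_right _)).mul_left _)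
  exact Summable.of_nonneg_of_le (fun i => abs_nonneg _) main hg
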